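/- arXiv:1205.2174 — 2 statements merged into one kernel-verified Lean document; each statement's English description precedes it below -/
import Mathlib

section
/- Let A = (Q, Σ) be a DFA. Alice has a winning strategy in the synchronization game on A (starting from the initial position Q) if and only if for every two-element subset {q, q'} of Q, Alice has a winning strategy in the synchronization game on A starting from the position {q, q'}. -/
/-- Apply a word (list of letters) to a state of a DFA with transition function `δ`. -/
def applyWord {Q A : Type*} (δ : Q → A → Q) (q : Q) : List A → Q
  | [] => q
  | a :: w => applyWord δ (δ q a) w

/-- The history (list) of letters played after `n` moves of the synchronization game,
when Alice uses strategy `σA` and Bob uses strategy `σB`; Alice moves first, i.e.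
the letters at even indices are chosen by Alice and those at odd indices by Bob. -/
def playHist {A : Type*} (σA σB : List A → A) : ℕ → List A
  | 0 => []
  | n + 1 =>
      let h := playHist σA σB n
      h ++ [if n % 2 = 0 then σA h else σB h]

/-- `w` synchronizes the position `P` (a set of states holding coins) to a single state. -/
def IsResetFrom {Q A : Type*} [DecidableEq Q] (δ : Q → A → Q) (P : Finset Q)
    (w : List A) : Prop :=
  (P.image fun q => applyWord δ q w).card = 1

/-- Alice has a winning strategy in the synchronization game starting from position `P`. -/
def AliceWins {Q A : Type*} [DecidableEq Q] (δ : Q → A → Q) (P : Finset Q) : Prop :=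
  ∃ σA : List A → A, ∀ σB : List A → A, ∃ k : ℕ,
    IsResetFrom δ P (playHist σA σB k)

/-- Alice has a strategy in the synchronization game starting from position `P` that
guarantees reaching a singleton position in a play in which Alice has chosen at most
`m` letters (after `k` letters in total, Alice has chosen `(k + 1) / 2` of them). -/
def AliceWinsWithin {Q A : Type*} [DecidableEq Q] (δ : Q → A → Q) (P : Finset Q)
    (m : ℕ) : Prop :=
  ∃ σA : List A → A, ∀ σB : List A → A, ∃ k : ℕ,
    IsResetFrom δ P (playHist σA σB k) ∧ (k + 1) / 2 ≤ m

/-- Bob has a winning strategy in the synchronization game starting from position `P`: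
against every strategy of Alice the position never becomes a singleton. -/
def BobWins {Q A : Type*} [DecidableEq Q] (δ : Q → A → Q) (P : Finset Q) : Prop :=
  ∃ σB : List A → A, ∀ σA : List A → A, ∀ k : ℕ,
    ¬ IsResetFrom δ P (playHist σA σB k)

theorem applyWord_append {Q A : Type*} (δ : Q → A → Q) (q : Q) (u v : List A) :
    applyWord δ q (u ++ v) = applyWord δ (applyWord δ q u) v := by
  induction u generalizing q with
  | nil => rfl
  | cons a u ih => simp [applyWord, ih]

theorem playHist_length {A : Type*} (σA σB : List A → A) (n : ℕ) :
    (playHist σA σB n).length = n := by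
  induction n with
  | zero => rfl
  | succ n ih => simp [playHist, ih]

theorem playHist_succ {A : Type*} (σA σB : List A → A) (n : ℕ) :
    playHist σA σB (n+1) = playHist σA σB n ++
      [if n % 2 = 0 then σA (playHist σA σB n) else σB (playHist σA σB n)] := rfl

theorem playHist_take {A : Type*} (σA σB : List A → A) {j m : ℕ} (h : j ≤ m) :
    (playHist σA σB m).take j = playHist σA σB j := by
  induction m with
  | zero => interval_cases j; rfl
  | succ m ih =>
    rcases Nat.lt_or_ge j (m+1) with hj | hj
    · have hj' : j ≤ m := Nat.lt_succ_iff.mp hj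
      rw [playHist_succ, List.take_append_of_le_length (by rw [playHist_length]; exact hj')]
      exact ih hj'
    · have : j = m+1 := le_antisymm h hj
      subst this
      exact List.take_of_length_le (by rw [playHist_length])

theorem reset_of_subset {Q A : Type*} [DecidableEq Q] (δ : Q → A → Q) {P R : Finset Q}
    (hne : P.Nonempty) (hsub : P ⊆ R) {w : List A} (h : IsResetFrom δ R w) :
    IsResetFrom δ P w := by
  unfold IsResetFrom at *
  have h2 := Finset.card_le_card (Finset.image_subset_image hsub
    (f := fun q => applyWord δ q w))
  have h3 : 1 ≤ (P.image fun q => applyWord δ q w).card :=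
    Finset.card_pos.mpr (hne.image _)
  omega

theorem main_aux {Q A : Type*} [DecidableEq Q] [Nonempty A] (δ : Q → A → Q)
    (hp : ∀ q q' : Q, q ≠ q' → AliceWins δ {q, q'}) :
    ∀ n (P : Finset Q), P.Nonempty → P.card ≤ n → AliceWins δ P := by
  intro n
  induction n with
  | zero =>
    intro P hne hcard
    exact absurd (Finset.card_pos.mpr hne) (by omega)
  | succ n IH =>
    intro P hne hcard
    classical
    rcases Nat.lt_or_ge P.card (n+1) with hlt | hge
    · exact IH P hne (by omega)
    have hcardP : P.card = n+1 := le_antisymm hcard hge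
    by_cases hn : n = 0
    · subst hn
      refine ⟨fun _ => Classical.arbitrary A, fun σB => ⟨0, ?_⟩⟩
      unfold IsResetFrom
      simpa [playHist, applyWord] using hcardP
    obtain ⟨q, hq, q', hq', hqq'⟩ := Finset.one_lt_card.mp (by omega : 1 < P.card)
    obtain ⟨σp, Hp⟩ := hp q q' hqq'
    have key : ∀ P' : Finset Q, ∃ σ : List A → A,
        P'.Nonempty → P'.card ≤ n → ∀ σB, ∃ k, IsResetFrom δ P' (playHist σ σB k) := by
      intro P'
      by_cases h : P'.Nonempty ∧ P'.card ≤ n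
      · obtain ⟨σ, hσ⟩ := IH P' h.1 h.2
        exact ⟨σ, fun _ _ => hσ⟩
      · exact ⟨fun _ => Classical.arbitrary A, fun h1 h2 => absurd ⟨h1, h2⟩ h⟩
    choose F hF using key
    refine ⟨fun h => if hc : ∃ j, IsResetFrom δ ({q, q'} : Finset Q) (h.take j) then
        F (P.image fun x => applyWord δ x (h.take (2 * ((Nat.find hc + 1) / 2))))
          (h.drop (2 * ((Nat.find hc + 1) / 2)))
      else σp h, ?_⟩
    intro σB
    obtain ⟨k, hk⟩ := Hp σB
    have hex : ∃ k, IsResetFrom δ ({q, q'} : Finset Q) (playHist σp σB k) := ⟨k, hk⟩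
    set k0 := Nat.find hex with hk0
    have hMk0 : IsResetFrom δ ({q, q'} : Finset Q) (playHist σp σB k0) := Nat.find_spec hex
    have hmin : ∀ j, j < k0 → ¬ IsResetFrom δ ({q, q'} : Finset Q) (playHist σp σB j) :=
      fun j hj => Nat.find_min hex hj
    set Γ : List A → A := fun h =>
      if hc : ∃ j, IsResetFrom δ ({q, q'} : Finset Q) (h.take j) then
        F (P.image fun x => applyWord δ x (h.take (2 * ((Nat.find hc + 1) / 2))))
          (h.drop (2 * ((Nat.find hc + 1) / 2)))
      else σp h with hΓ
    -- phase 1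
    have C1 : ∀ m, m ≤ k0 → playHist Γ σB m = playHist σp σB m := by
      intro m
      induction m with
      | zero => intro _; rfl
      | succ m ih =>
        intro hm
        have hm' : m ≤ k0 := le_of_lt hm
        rw [playHist_succ, playHist_succ, ih hm']
        congr 1
        have hnc : ¬ ∃ j, IsResetFrom δ ({q, q'} : Finset Q)
            ((playHist σp σB m).take j) := by
          rintro ⟨j, hj⟩
          rcases Nat.lt_or_ge j m with h1 | h1
          · rw [playHist_take σp σB (le_of_lt h1)] at hj
            exact hmin j (by omega) hj
          · rw [List.take_of_length_le (by rw [playHist_length]; exact h1)] at hj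
            exact hmin m (by omega) hj
        by_cases hpar : m % 2 = 0
        · simp only [hpar, if_true, hΓ]
          rw [dif_neg hnc]
        · simp [hpar]
    set js := 2 * ((k0 + 1) / 2) with hjs
    have hjs1 : k0 ≤ js := by omega
    have hjs2 : js ≤ k0 + 1 := by omega
    set H := playHist Γ σB js with hH
    have lenH : H.length = js := playHist_length _ _ _
    set P' := P.image fun x => applyWord δ x H with hP'
    set σB' : List A → A := fun l => σB (H ++ l) with hσB'
    have takeH : ∀ j, j ≤ k0 → ∀ l : List A, (H ++ l).take j = playHist σp σB j := by
      intro j hj l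
      rw [List.take_append_of_le_length (by omega), hH,
        playHist_take Γ σB (le_trans hj hjs1), C1 j hj]
    have hcH : ∀ l : List A, ∃ j, IsResetFrom δ ({q, q'} : Finset Q) ((H ++ l).take j) :=
      fun l => ⟨k0, by rw [takeH k0 le_rfl l]; exact hMk0⟩
    have findH : ∀ l : List A, Nat.find (hcH l) = k0 := by
      intro l
      rw [Nat.find_eq_iff]
      refine ⟨by rw [takeH k0 le_rfl l]; exact hMk0, fun j hj hMj => ?_⟩
      rw [takeH j (le_of_lt hj) l] at hMj
      exact hmin j hj hMj
    -- phase 2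
    have C2 : ∀ m, playHist Γ σB (js + m) = H ++ playHist (F P') σB' m := by
      intro m
      induction m with
      | zero => simp [hH, playHist]
      | succ m ih =>
        rw [show js + (m+1) = (js + m) + 1 by ring, playHist_succ, ih, playHist_succ,
          ← List.append_assoc]
        congr 1
        have hpar : (js + m) % 2 = m % 2 := by omega
        rw [hpar]
        by_cases hp2 : m % 2 = 0
        · simp only [hp2, if_true, hΓ]
          rw [dif_pos (hcH _), findH]
          have ht : (H ++ playHist (F P') σB' m).take js = H := by
            rw [← lenH, List.take_left]
          have hd : (H ++ playHist (F P') σB' m).drop js = playHist (F P') σB' m := by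
            rw [← lenH, List.drop_left]
          rw [ht, hd]
        · simp only [hp2, if_false, hσB']
    -- card bound
    have takek0H : H.take k0 = playHist σp σB k0 := by
      rw [hH, playHist_take Γ σB hjs1, C1 k0 le_rfl]
    have hmerge : applyWord δ q (playHist σp σB k0) = applyWord δ q' (playHist σp σB k0) := by
      have h1 : applyWord δ q (playHist σp σB k0) ∈
          ({q, q'} : Finset Q).image fun x => applyWord δ x (playHist σp σB k0) :=
        Finset.mem_image_of_mem _ (by simp)
      have h2 : applyWord δ q' (playHist σp σB k0) ∈
          ({q, q'} : Finset Q).image fun x => applyWord δ x (playHist σp σB k0) :=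
        Finset.mem_image_of_mem _ (by simp)
      exact Finset.card_le_one.mp (le_of_eq hMk0) _ h1 _ h2
    have hcardP' : P'.card ≤ n := by
      have hHdec : H = playHist σp σB k0 ++ H.drop k0 := by
        conv_lhs => rw [← List.take_append_drop k0 H]
        rw [takek0H]
      have hPeq : P' = (P.image fun x => applyWord δ x (playHist σp σB k0)).image
          fun x => applyWord δ x (H.drop k0) := by
        rw [hP']
        conv_lhs => rw [hHdec]
        rw [Finset.image_image]
        apply Finset.image_congr
        intro x _
        simp [applyWord_append]
      have hsub2 : (P.image fun x => applyWord δ x (playHist σp σB k0)) ⊆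
          ((P.erase q').image fun x => applyWord δ x (playHist σp σB k0)) := by
        intro x hx
        obtain ⟨p, hpP, rfl⟩ := Finset.mem_image.mp hx
        by_cases hpq : p = q'
        · subst hpq
          exact Finset.mem_image.mpr ⟨q, Finset.mem_erase.mpr ⟨hqq', hq⟩, hmerge⟩
        · exact Finset.mem_image.mpr ⟨p, Finset.mem_erase.mpr ⟨hpq, hpP⟩, rfl⟩
      calc P'.card ≤ (P.image fun x => applyWord δ x (playHist σp σB k0)).card := by
            rw [hPeq]; exact Finset.card_image_le
        _ ≤ ((P.erase q').image fun x => applyWord δ x (playHist σp σB k0)).card :=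
            Finset.card_le_card hsub2
        _ ≤ (P.erase q').card := Finset.card_image_le
        _ = n := by rw [Finset.card_erase_of_mem hq', hcardP]; omega
    have hneP' : P'.Nonempty := hne.image _
    obtain ⟨m, hm⟩ := hF P' hneP' hcardP' σB'
    refine ⟨js + m, ?_⟩
    rw [C2 m]
    unfold IsResetFrom at hm ⊢
    have : (P.image fun x => applyWord δ x (H ++ playHist (F P') σB' m)) =
        P'.image fun x => applyWord δ x (playHist (F P') σB' m) := by
      rw [hP', Finset.image_image]
      apply Finset.image_congr
      intro x _
      simp [applyWord_append]
    rw [this]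
    exact hm

/-- Lemma 1 (localization): Alice has a winning strategy in the synchronization game on a
DFA (from the initial position, where every state holds a coin) if and only if she has a
winning strategy from every position in which exactly two states hold coins. -/
theorem alice_wins_iff_wins_on_pairs {Q A : Type*} [Fintype Q] [Nonempty Q] [DecidableEq Q]
    [Nonempty A] (δ : Q → A → Q) :
    AliceWins δ Finset.univ ↔ ∀ q q' : Q, q ≠ q' → AliceWins δ {q, q'} := by
  constructor
  · rintro ⟨σA, hσA⟩ q q' hqq'
    refine ⟨σA, fun σB => ?_⟩
    obtain ⟨k, hk⟩ := hσA σB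
    exact ⟨k, reset_of_subset δ ⟨q, by simp⟩ (Finset.subset_univ _) hk⟩
  · intro hp
    exact main_aux δ hp (Fintype.card Q) Finset.univ Finset.univ_nonempty (by simp)
end

section
/- Let ψ be a CNF formula with variables x1, …, xn and clauses c1, …, cm, and let A(ψ) be the Eppstein automaton of ψ. For every truth assignment τ : {x1, …, xn} → {0, 1} and every i with 1 ≤ i ≤ m, the assignment τ makes the clause c_i true if and only if the word a1 a2 ⋯ an of length n defined by a_j = a if τ(x_j) = 1 and a_j = b if τ(x_j) = 0 sends all of the states q_{i,1}, …, q_{i,n+1} of A(ψ) to the state z. -/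
/-- The Eppstein automaton `A(ψ)` of a CNF formula `ψ` with `n` variables and `m` clauses.
The clause `c_i` contains the literal `x_j` iff `pos i j = true` and the literal `¬x_j`
iff `neg i j = true`. States: `Sum.inl (i, j)` is the state `q_{i,j+1}` (so `j : Fin (n+1)`
ranges over the `0`-based versions of the indices `1, …, n+1`) and `Sum.inr ()` is the
state `z`. The alphabet is `Bool`, with `true` for the letter `a` and `false` for `b`. -/
def eppstein {n m : ℕ} (pos neg : Fin m → Fin n → Bool) :
    (Fin m × Fin (n + 1)) ⊕ Unit → Bool → (Fin m × Fin (n + 1)) ⊕ Unit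
  | Sum.inr _, _ => Sum.inr ()
  | Sum.inl (i, j), c =>
      if h : (j : ℕ) < n then
        if (if c then pos i ⟨j, h⟩ else neg i ⟨j, h⟩) = true then Sum.inr ()
        else Sum.inl (i, ⟨(j : ℕ) + 1, by omega⟩)
      else Sum.inr ()

/-!
A state `q_{i,j}` walks along row `i` one step per letter until either the current letter satisfies
the literal of `c_i` at its column, which sends it to the sink `z`, or it falls off the end of the
row, which also sends it to `z`. Started at `q_{i,1}`, the word of `τ` reads the letter `τ(x_j)` at
column `j`, so it reaches `z` exactly when some literal of `c_i` is true under `τ`; every other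
`q_{i,j}` runs off the row within `n` letters anyway.
-/

theorem applyWord_eq_self_of_forall {Q A : Type*} {δ : Q → A → Q} {q : Q} (hq : ∀ a, δ q a = q)
    (w : List A) : applyWord δ q w = q := by
  induction w with
  | nil => rfl
  | cons a w ih => simpa only [applyWord, hq] using ih

section Eppstein

variable {n m : ℕ} (pos neg : Fin m → Fin n → Bool) (i : Fin m)

/-- The letter `c` sends the state `q_{i,k+1}` to `z`; this holds for every `c` once `k ≥ n`. -/
def KillsAt (k : ℕ) (c : Bool) : Prop :=
  ∀ h : k < n, (if c then pos i ⟨k, h⟩ else neg i ⟨k, h⟩) = true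

theorem killsAt_of_le {k : ℕ} (hk : n ≤ k) (c : Bool) : KillsAt pos neg i k c :=
  fun h => absurd h (by omega)

theorem killsAt_iff (j : Fin n) (c : Bool) :
    KillsAt pos neg i j c ↔ (pos i j = true ∧ c = true) ∨ (neg i j = true ∧ c = false) := by
  cases c <;> simp [KillsAt]

theorem eppstein_inl_of_killsAt {j : Fin (n + 1)} {c : Bool} (h : KillsAt pos neg i j c) :
    eppstein pos neg (.inl (i, j)) c = .inr () := by
  by_cases hj : (j : ℕ) < n
  · rw [eppstein, dif_pos hj, if_pos (h hj)]
  · rw [eppstein, dif_neg hj]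

theorem eppstein_inl_of_not_killsAt {j : Fin (n + 1)} {c : Bool} (h : ¬ KillsAt pos neg i j c) :
    ∃ hj : (j : ℕ) < n, eppstein pos neg (.inl (i, j)) c = .inl (i, ⟨j + 1, by omega⟩) := by
  have hj : (j : ℕ) < n := by
    by_contra hj
    exact h (killsAt_of_le pos neg i (not_lt.mp hj) c)
  refine ⟨hj, ?_⟩
  rw [eppstein, dif_pos hj, if_neg fun hc => h fun _ => hc]

theorem applyWord_eppstein_inr (w : List Bool) :
    applyWord (eppstein pos neg) (.inr ()) w = .inr () :=
  applyWord_eq_self_of_forall (fun _ => rfl) w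

theorem applyWord_eppstein_inl_eq_inr_iff (w : List Bool) (j : Fin (n + 1)) :
    applyWord (eppstein pos neg) (.inl (i, j)) w = .inr () ↔
      ∃ t, ∃ ht : t < w.length, KillsAt pos neg i (j + t) w[t] := by
  induction w generalizing j with
  | nil => simp [applyWord]
  | cons c w ih =>
    by_cases hc : KillsAt pos neg i j c
    · simp only [applyWord, eppstein_inl_of_killsAt pos neg i hc, applyWord_eppstein_inr, true_iff]
      exact ⟨0, by simp, hc⟩
    · obtain ⟨_, hstep⟩ := eppstein_inl_of_not_killsAt pos neg i hc
      rw [applyWord, hstep, ih]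
      constructor
      · rintro ⟨t, ht, hkill⟩
        exact ⟨t + 1, by simpa using ht, by simpa [add_assoc, add_comm 1 t] using hkill⟩
      · rintro ⟨_ | t, ht, hkill⟩
        · exact absurd hkill hc
        · exact ⟨t, by simpa using ht, by simpa [add_assoc, add_comm 1 t] using hkill⟩

end Eppstein

/-- A truth assignment `τ` makes the clause `c_i` of a CNF formula true if and only if the
word `a_1 ⋯ a_n` (where `a_j` is the letter `a`, i.e. `true`, if `τ(x_j) = 1` and the
letter `b`, i.e. `false`, if `τ(x_j) = 0`) sends all of the states `q_{i,1}, …, q_{i,n+1}`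
of the Eppstein automaton to the state `z`. -/
theorem eppstein_clause_true_iff (n m : ℕ) (pos neg : Fin m → Fin n → Bool)
    (τ : Fin n → Bool) (i : Fin m) :
    (∃ j : Fin n, (pos i j = true ∧ τ j = true) ∨ (neg i j = true ∧ τ j = false)) ↔
      ∀ j : Fin (n + 1),
        applyWord (eppstein pos neg) (Sum.inl (i, j)) (List.ofFn τ) = Sum.inr () := by
  simp only [applyWord_eppstein_inl_eq_inr_iff, List.length_ofFn, List.getElem_ofFn]
  constructor
  · rintro ⟨t, ht⟩ j
    by_cases hj : (j : ℕ) = 0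
    · exact ⟨t, t.isLt, by simpa [hj, killsAt_iff] using ht⟩
    · exact ⟨n - j, by omega, killsAt_of_le pos neg i (by omega) _⟩
  · intro h
    obtain ⟨t, ht, hkill⟩ := h 0
    exact ⟨⟨t, ht⟩, (killsAt_iff pos neg i _ _).mp (by simpa using hkill)⟩
end
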